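/- Let f : ℝ^d → ℝ be twice continuously differentiable with λmin·I ⪯ ∇²f(x) ⪯ λmax·I for all x and L-Lipschitz Hessian, with unique minimizer x*. Then for all x₁, x₂ ∈ ℝ^d, ‖H(x₁)^{-1/2} H(x₂) H(x₁)^{-1/2} - I‖ ≤ (L/λmin^{3/2})·‖x₁ - x₂‖_{H*}. -/

import Mathlib

open Real
open scoped BigOperators Matrix

/-- Spectral norm (ℓ₂ operator norm) of a real matrix. -/
noncomputable def specNorm {d : ℕ} (A : Matrix (Fin d) (Fin d) ℝ) : ℝ :=
  ‖Matrix.toEuclideanCLM (𝕜 := ℝ) A‖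

/-- Euclidean (ℓ₂) norm of a vector. -/
noncomputable def vnorm {d : ℕ} (v : Fin d → ℝ) : ℝ := Real.sqrt (∑ i, v i ^ 2)

/-- The norm ‖v‖_A = √(vᵀAv) induced by a positive semidefinite matrix A. -/
noncomputable def Mnorm {d : ℕ} (A : Matrix (Fin d) (Fin d) ℝ) (v : Fin d → ℝ) : ℝ :=
  Real.sqrt (dotProduct v (A.mulVec v))

/-- The positive semidefinite square root of a positive semidefinite matrix
(removed from Mathlib; restored with its former definition). -/
noncomputable def Matrix.PosSemidef.sqrt {n : Type*} [Fintype n] [DecidableEq n]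
    {A : Matrix n n ℝ} (hA : A.PosSemidef) : Matrix n n ℝ :=
  (hA.1.eigenvectorUnitary : Matrix n n ℝ) * Matrix.diagonal ((↑) ∘ (√·) ∘ hA.1.eigenvalues) *
    (star hA.1.eigenvectorUnitary : Matrix n n ℝ)

/-!
Write `S = H(x₁)^{1/2}`. Then `S⁻¹ H(x₂) S⁻¹ - I = S⁻¹ (H(x₂) - H(x₁)) S⁻¹`, so the left side is at
most `‖S⁻¹‖² · L ‖x₁ - x₂‖`. The lower bound `H ⪰ λmin I` gives `‖S w‖² = wᵀ H(x₁) w ≥ λmin ‖w‖²`,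
hence `‖S⁻¹‖ ≤ λmin^{-1/2}`, and likewise `‖v‖ ≤ λmin^{-1/2} ‖v‖_{H*}`.
-/

open Matrix

namespace Matrix

variable {n : Type*} [DecidableEq n]

lemma posDef_of_posSemidef_sub {A : Matrix n n ℝ} {c : ℝ} (hc : 0 < c)
    (h : (A - c • 1).PosSemidef) : A.PosDef := by
  simpa using (PosDef.one.smul hc).add_posSemidef h

variable [Fintype n]

lemma PosSemidef.sqrt_mul_self {A : Matrix n n ℝ} (hA : A.PosSemidef) :
    hA.sqrt * hA.sqrt = A := by
  set U : Matrix n n ℝ := (hA.1.eigenvectorUnitary : Matrix n n ℝ)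
  have hU : star U * U = 1 := Unitary.coe_star_mul_self _
  set D := diagonal ((↑) ∘ (√·) ∘ hA.1.eigenvalues : n → ℝ)
  have hD : D * D = diagonal (RCLike.ofReal ∘ hA.1.eigenvalues) := by
    rw [diagonal_mul_diagonal]
    congr 1
    funext i
    simp [Real.mul_self_sqrt (hA.eigenvalues_nonneg i)]
  conv_rhs => rw [hA.1.spectral_theorem, Unitary.conjStarAlgAut_apply, ← hD]
  simp only [PosSemidef.sqrt, Matrix.mul_assoc]
  rw [← Matrix.mul_assoc (star U), hU, Matrix.one_mul]

lemma PosSemidef.sqrt_transpose {A : Matrix n n ℝ} (hA : A.PosSemidef) : hA.sqrtᵀ = hA.sqrt := by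
  have h := isHermitian_mul_mul_conjTranspose (hA.1.eigenvectorUnitary : Matrix n n ℝ)
    (isHermitian_diagonal ((↑) ∘ (√·) ∘ hA.1.eigenvalues : n → ℝ))
  rw [IsHermitian, conjTranspose_eq_transpose_of_trivial, ← star_eq_conjTranspose] at h
  exact h

lemma PosSemidef.dotProduct_sqrt_mulVec {A : Matrix n n ℝ} (hA : A.PosSemidef) (v : n → ℝ) :
    hA.sqrt *ᵥ v ⬝ᵥ hA.sqrt *ᵥ v = v ⬝ᵥ A *ᵥ v := by
  conv_rhs => rw [← hA.sqrt_mul_self, ← mulVec_mulVec, dotProduct_mulVec, ← mulVec_transpose,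
    hA.sqrt_transpose]

lemma PosSemidef.isUnit_det_sqrt {A : Matrix n n ℝ} (hA : A.PosSemidef) (hdet : IsUnit A.det) :
    IsUnit hA.sqrt.det :=
  isUnit_of_mul_isUnit_left (by rwa [← det_mul, hA.sqrt_mul_self])

lemma mul_dotProduct_self_le_of_posSemidef_sub {A : Matrix n n ℝ} {c : ℝ}
    (h : (A - c • 1).PosSemidef) (v : n → ℝ) : c * (v ⬝ᵥ v) ≤ v ⬝ᵥ A *ᵥ v := by
  have := h.dotProduct_mulVec_nonneg v
  simp only [sub_mulVec, dotProduct_sub, smul_mulVec, one_mulVec, dotProduct_smul, star_trivial,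
    smul_eq_mul] at this
  linarith

lemma nonsing_inv_mul_mul_nonsing_inv_sub_one {α : Type*} [CommRing α] {S : Matrix n n α}
    (hS : IsUnit S.det) (B : Matrix n n α) : S⁻¹ * B * S⁻¹ - 1 = S⁻¹ * (B - S * S) * S⁻¹ := by
  rw [mul_sub, sub_mul, nonsing_inv_mul_cancel_left _ _ hS, mul_nonsing_inv _ hS]

end Matrix

section Norms

variable {d : ℕ}

lemma vnorm_eq_norm_toLp (v : Fin d → ℝ) : vnorm v = ‖WithLp.toLp 2 v‖ := by
  simp [vnorm, EuclideanSpace.norm_eq]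

lemma vnorm_eq_sqrt_dotProduct (v : Fin d → ℝ) : vnorm v = √(v ⬝ᵥ v) := by
  simp [vnorm, dotProduct, sq]

lemma vnorm_sub_comm (v w : Fin d → ℝ) : vnorm (v - w) = vnorm (w - v) := by
  simp only [vnorm_eq_norm_toLp, WithLp.toLp_sub, norm_sub_rev]

lemma specNorm_nonneg (A : Matrix (Fin d) (Fin d) ℝ) : 0 ≤ specNorm A :=
  norm_nonneg _

lemma specNorm_sub_comm (A B : Matrix (Fin d) (Fin d) ℝ) : specNorm (A - B) = specNorm (B - A) := by
  simp only [specNorm, map_sub, norm_sub_rev]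

lemma specNorm_mul_le (A B : Matrix (Fin d) (Fin d) ℝ) :
    specNorm (A * B) ≤ specNorm A * specNorm B := by
  simpa only [specNorm, map_mul] using norm_mul_le _ _

lemma specNorm_mul_mul_le (A B C : Matrix (Fin d) (Fin d) ℝ) :
    specNorm (A * B * C) ≤ specNorm A * specNorm B * specNorm C :=
  (specNorm_mul_le _ _).trans <|
    mul_le_mul_of_nonneg_right (specNorm_mul_le _ _) (specNorm_nonneg _)

lemma sqrt_mul_vnorm_le_Mnorm {A : Matrix (Fin d) (Fin d) ℝ} {c : ℝ} (hc : 0 ≤ c)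
    (h : (A - c • 1).PosSemidef) (v : Fin d → ℝ) : √c * vnorm v ≤ Mnorm A v := by
  rw [vnorm_eq_sqrt_dotProduct, Mnorm, ← Real.sqrt_mul hc]
  exact Real.sqrt_le_sqrt (mul_dotProduct_self_le_of_posSemidef_sub h v)

lemma specNorm_nonsing_inv_le {M : Matrix (Fin d) (Fin d) ℝ} (hM : IsUnit M.det) {c : ℝ}
    (hc : 0 < c) (h : ∀ v, c * vnorm v ≤ vnorm (M *ᵥ v)) : specNorm M⁻¹ ≤ c⁻¹ := by
  refine ContinuousLinearMap.opNorm_le_bound _ (by positivity) fun v => ?_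
  have hv := h (M⁻¹ *ᵥ v.ofLp)
  rw [mulVec_mulVec, mul_nonsing_inv _ hM, one_mulVec, vnorm_eq_norm_toLp, vnorm_eq_norm_toLp,
    WithLp.toLp_ofLp, ← toEuclideanCLM_toLp, WithLp.toLp_ofLp] at hv
  rw [inv_mul_eq_div, le_div_iff₀ hc]
  linarith

lemma specNorm_inv_sqrt_le {A : Matrix (Fin d) (Fin d) ℝ} (hA : A.PosSemidef) {c : ℝ} (hc : 0 < c)
    (h : (A - c • 1).PosSemidef) : specNorm hA.sqrt⁻¹ ≤ (√c)⁻¹ := by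
  refine specNorm_nonsing_inv_le (hA.isUnit_det_sqrt ?_) (Real.sqrt_pos.mpr hc) fun v => ?_
  · exact (posDef_of_posSemidef_sub hc h).det_pos.ne'.isUnit
  · rw [vnorm_eq_sqrt_dotProduct (hA.sqrt *ᵥ v), hA.dotProduct_sqrt_mulVec]
    exact sqrt_mul_vnorm_le_Mnorm hc.le h v

end Norms

theorem stmt19_general
    {d : ℕ}
    (H : (Fin d → ℝ) → Matrix (Fin d) (Fin d) ℝ)
    (lmin L : ℝ) (hlmin : 0 < lmin) (hL : 0 < L)
    (hpsd : ∀ y, (H y).PosSemidef)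
    (hlow : ∀ y, (H y - lmin • (1 : Matrix (Fin d) (Fin d) ℝ)).PosSemidef)
    (hLip : ∀ y z, specNorm (H y - H z) ≤ L * vnorm (y - z))
    (xstar : Fin d → ℝ) :
    ∀ x₁ x₂ : Fin d → ℝ,
      specNorm (((hpsd x₁).sqrt)⁻¹ * H x₂ * ((hpsd x₁).sqrt)⁻¹ - 1) ≤
        (L / lmin ^ ((3 : ℝ) / 2)) * Mnorm (H xstar) (x₁ - x₂) := by
  intro x₁ x₂
  set S := (hpsd x₁).sqrt
  have hSdet : IsUnit S.det :=
    (hpsd x₁).isUnit_det_sqrt (posDef_of_posSemidef_sub hlmin (hlow x₁)).det_pos.ne'.isUnit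
  have hS : specNorm S⁻¹ ≤ (√lmin)⁻¹ := specNorm_inv_sqrt_le (hpsd x₁) hlmin (hlow x₁)
  have hH : specNorm (H x₂ - H x₁) ≤ L * ((√lmin)⁻¹ * Mnorm (H xstar) (x₁ - x₂)) := by
    rw [specNorm_sub_comm]
    refine (hLip x₁ x₂).trans (mul_le_mul_of_nonneg_left ?_ hL.le)
    exact (le_inv_mul_iff₀ (Real.sqrt_pos.mpr hlmin)).mpr
      (sqrt_mul_vnorm_le_Mnorm hlmin.le (hlow xstar) _)
  have hH_nonneg := (specNorm_nonneg _).trans hH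
  have hpow : lmin ^ ((3 : ℝ) / 2) = √lmin ^ 3 := by
    rw [Real.sqrt_eq_rpow, ← Real.rpow_natCast, ← Real.rpow_mul hlmin.le]
    norm_num
  calc specNorm (S⁻¹ * H x₂ * S⁻¹ - 1)
      = specNorm (S⁻¹ * (H x₂ - H x₁) * S⁻¹) := by
        rw [nonsing_inv_mul_mul_nonsing_inv_sub_one hSdet, (hpsd x₁).sqrt_mul_self]
    _ ≤ specNorm S⁻¹ * specNorm (H x₂ - H x₁) * specNorm S⁻¹ := specNorm_mul_mul_le _ _ _
    _ ≤ (√lmin)⁻¹ * (L * ((√lmin)⁻¹ * Mnorm (H xstar) (x₁ - x₂))) * (√lmin)⁻¹ := by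
        gcongr <;> exact specNorm_nonneg _
    _ = (L / lmin ^ ((3 : ℝ) / 2)) * Mnorm (H xstar) (x₁ - x₂) := by
        rw [hpow]
        field_simp

/-- Lemma B.2 in the paper: relative Hessian perturbation bound,
`‖H(x₁)^{-1/2} H(x₂) H(x₁)^{-1/2} - I‖ ≤ (L/λmin^{3/2})·‖x₁ - x₂‖_{H*}`. -/
theorem stmt19
    {d : ℕ} (f : (Fin d → ℝ) → ℝ) (g : (Fin d → ℝ) → Fin d → ℝ)
    (H : (Fin d → ℝ) → Matrix (Fin d) (Fin d) ℝ)
    (lmin lmax L : ℝ) (hlmin : 0 < lmin) (hlle : lmin ≤ lmax) (hL : 0 < L)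
    (hf : ContDiff ℝ 2 f)
    (hgrad : ∀ y v, fderiv ℝ f y v = dotProduct (g y) v)
    (hhess : ∀ y u v, fderiv ℝ (fun z => fderiv ℝ f z v) y u =
      dotProduct u ((H y).mulVec v))
    (hHsym : ∀ y, (H y).IsSymm)
    (hpsd : ∀ y, (H y).PosSemidef)
    (hlow : ∀ y, (H y - lmin • (1 : Matrix (Fin d) (Fin d) ℝ)).PosSemidef)
    (hup : ∀ y, (lmax • (1 : Matrix (Fin d) (Fin d) ℝ) - H y).PosSemidef)
    (hLip : ∀ y z, specNorm (H y - H z) ≤ L * vnorm (y - z))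
    (xstar : Fin d → ℝ) (hmin : ∀ y, f xstar ≤ f y)
    (huniq : ∀ y, (∀ z, f y ≤ f z) → y = xstar) :
    ∀ x₁ x₂ : Fin d → ℝ,
      specNorm (((hpsd x₁).sqrt)⁻¹ * H x₂ * ((hpsd x₁).sqrt)⁻¹ - 1) ≤
        (L / lmin ^ ((3 : ℝ) / 2)) * Mnorm (H xstar) (x₁ - x₂) :=
  stmt19_general H lmin L hlmin hL hpsd hlow hLip xstar
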